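/- Let p, q ∈ Δ(K) and let u, v be finite information structures with marg_K u = p and marg_K v = q. Then d(u,v) ≤ 2(1 - max_{p',q' ∈ Δ(K)} Σ_k min(p_k q'_k, p'_k q_k)). In particular, if p = q, then d(u,v) ≤ 2(1 - max_k p_k). -/

import Mathlib

open scoped BigOperators

noncomputable section

/-- A probability distribution on a finite type, given as a nonnegative function summing to 1. -/
def IsDist {α : Type*} [Fintype α] (u : α → ℝ) : Prop :=
  (∀ a, 0 ≤ u a) ∧ ∑ a, u a = 1

/-- A garbling (stochastic map / behavioral strategy). -/
def IsKernel {α β : Type*} [Fintype β] (q : α → β → ℝ) : Prop :=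
  ∀ a, IsDist (q a)

/-- Expected payoff in the zero-sum Bayesian game `Γ(u,g)` when players use
behavioral strategies `σ` and `τ`. -/
def pay {K C D I J : Type*} [Fintype K] [Fintype C] [Fintype D] [Fintype I] [Fintype J]
    (u : K × C × D → ℝ) (g : K → I → J → ℝ) (σ : C → I → ℝ) (τ : D → J → ℝ) : ℝ :=
  ∑ k, ∑ c, ∑ d, ∑ i, ∑ j, u (k, c, d) * σ c i * τ d j * g k i j

/-- The value (maxmin) of the zero-sum Bayesian game `Γ(u,g)`, player 1 maximizing. -/
def gameVal {K C D I J : Type*} [Fintype K] [Fintype C] [Fintype D] [Fintype I] [Fintype J]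
    (u : K × C × D → ℝ) (g : K → I → J → ℝ) : ℝ :=
  sSup {x : ℝ | ∃ σ : C → I → ℝ, IsKernel σ ∧
    x = sInf {y : ℝ | ∃ τ : D → J → ℝ, IsKernel τ ∧ y = pay u g σ τ}}

/-- Garbling of player 1's signal: `(q.u)(k,c,d) = ∑ c', u(k,c',d) q(c|c')`. -/
def garbleL {K C C' D : Type*} [Fintype C] (q : C → C' → ℝ) (u : K × C × D → ℝ) :
    K × C' × D → ℝ :=
  fun x => ∑ c, u (x.1, c, x.2.2) * q c x.2.1

/-- Garbling of player 2's signal: `(u.q)(k,c,d) = ∑ d', u(k,c,d') q(d|d')`. -/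
def garbleR {K C D D' : Type*} [Fintype D] (q : D → D' → ℝ) (u : K × C × D → ℝ) :
    K × C × D' → ℝ :=
  fun x => ∑ d, u (x.1, x.2.1, d) * q d x.2.2

/-- ℓ¹ distance. -/
def l1 {α : Type*} [Fintype α] (u v : α → ℝ) : ℝ := ∑ a, |u a - v a|

/-- Payoff functions bounded by 1. -/
def Bounded1 {K I J : Type*} (g : K → I → J → ℝ) : Prop := ∀ k i j, |g k i j| ≤ 1

/-- The value-based distance: sup over all finite zero-sum games (with nonempty
finite action sets, payoffs bounded by 1) of the absolute difference of values. -/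
def valueDist {K C D C' D' : Type*} [Fintype K] [Fintype C] [Fintype D] [Fintype C'] [Fintype D']
    (u : K × C × D → ℝ) (v : K × C' × D' → ℝ) : ℝ :=
  sSup {x : ℝ | ∃ (m n : ℕ) (g : K → Fin (m + 1) → Fin (n + 1) → ℝ),
    Bounded1 g ∧ x = |gameVal u g - gameVal v g|}

/-- Value of a single-agent decision problem on a single-agent information structure. -/
def val1 {K C I : Type*} [Fintype K] [Fintype C] [Fintype I] [Nonempty I]
    (u : K × C → ℝ) (g : K → I → ℝ) : ℝ :=
  ∑ c, ⨆ i, ∑ k, u (k, c) * g k i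

/-- The single-agent value-based distance. -/
def valueDist1 {K C C' : Type*} [Fintype K] [Fintype C] [Fintype C']
    (u : K × C → ℝ) (v : K × C' → ℝ) : ℝ :=
  sSup {x : ℝ | ∃ (m : ℕ) (g : K → Fin (m + 1) → ℝ),
    (∀ k i, |g k i| ≤ 1) ∧ x = |val1 u g - val1 v g|}

/-- Garbling of the signal in a single-agent structure. -/
def garble1 {K C C' : Type*} [Fintype C] (q : C → C' → ℝ) (u : K × C → ℝ) : K × C' → ℝ :=
  fun x => ∑ c, u (x.1, c) * q c x.2

end

/-!
Fix a game `g` and disintegrate `u` and `v` along the state: `∑_d u(k,c,d) = p_k r(c|k)` and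
`∑_c' v(k,c',d') = q_k s(d'|k)`. Against a strategy `σ` of player 1 in `u`, player 1 in `v` can
ignore her signal, draw `a ∼ p'` and a fake signal `c ∼ r(·|a)`, and play `σ(c)`; symmetrically
player 2 in `u` imitates any reply `τ'` from `v` by drawing `b ∼ q'`, `d' ∼ s(·|b)` and playing
`τ'(d')`. Both resulting plays are mixtures of the same conditional games (state `k`, signals
drawn from `r(·|a)` and `s(·|b)`), with weights `p_k q'_b [a = k]` and `q_k p'_a [b = k]` on
`(k, a, b)`. These weights overlap only at `a = b = k`, so they are
`2 - 2 ∑_k min(p_k q'_k, p'_k q_k)` apart in `ℓ¹`, which bounds the loss because payoffs lie in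
`[-1, 1]`. For `p = q`, take `p' = q' = δ_k`.
-/

open Finset

section Distributions

variable {α β : Type*} [Fintype α] [Fintype β]

lemma isDist_pi_single [DecidableEq α] (a : α) : IsDist (Pi.single a (1 : ℝ)) :=
  ⟨fun b => by by_cases h : b = a <;> simp [h], by simp⟩

lemma IsDist.mix {w : α → ℝ} {κ : α → β → ℝ} (hw : IsDist w) (hκ : IsKernel κ) :
    IsDist (fun b => ∑ a, w a * κ a b) := by
  refine ⟨fun b => sum_nonneg fun a _ => mul_nonneg (hw.1 a) ((hκ a).1 b), ?_⟩
  rw [sum_comm]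
  simp [← mul_sum, (hκ _).2, hw.2]

lemma IsDist.prod {w : α → ℝ} {w' : β → ℝ} (hw : IsDist w) (hw' : IsDist w') :
    IsDist (fun x : α × β => w x.1 * w' x.2) :=
  ⟨fun x => mul_nonneg (hw.1 _) (hw'.1 _), by
    rw [Fintype.sum_prod_type, ← Fintype.sum_mul_sum, hw.2, hw'.2, one_mul]⟩

lemma IsDist.nonempty {w : α → ℝ} (hw : IsDist w) : Nonempty α := by
  by_contra h
  rw [not_nonempty_iff] at h
  simpa using hw.2

lemma isDist_marginal {γ : Type*} [Fintype γ] {w : α × β × γ → ℝ} (hw : IsDist w) {p : α → ℝ}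
    (hp : ∀ a, ∑ b, ∑ c, w (a, b, c) = p a) : IsDist p :=
  ⟨fun a => hp a ▸ sum_nonneg fun _ _ => sum_nonneg fun _ _ => hw.1 _, by
    simpa only [← hp, Fintype.sum_prod_type] using hw.2⟩

end Distributions

section Kernels

variable {β : Type*} [Fintype β]

lemma exists_isKernel (α : Type*) [Nonempty β] : ∃ κ : α → β → ℝ, IsKernel κ := by
  classical
  exact ⟨fun _ => Pi.single (Classical.arbitrary β) 1, fun _ => isDist_pi_single _⟩

lemma exists_isKernel_mul_eq {α : Type*} [Nonempty β] {m : α → β → ℝ} (hm : ∀ a b, 0 ≤ m a b) :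
    ∃ κ : α → β → ℝ, IsKernel κ ∧ ∀ a b, m a b = (∑ b', m a b') * κ a b := by
  classical
  obtain ⟨κ₀, hκ₀⟩ := exists_isKernel α (β := β)
  refine ⟨fun a => if ∑ b', m a b' = 0 then κ₀ a else fun b => m a b / ∑ b', m a b', ?_, ?_⟩
  · intro a
    dsimp only
    split_ifs with h
    · exact hκ₀ a
    · exact ⟨fun b => div_nonneg (hm a b) (sum_nonneg fun b _ => hm a b),
        by rw [← sum_div, div_self h]⟩
  · intro a b
    dsimp only
    split_ifs with h
    · rw [h, zero_mul]
      exact (sum_eq_zero_iff_of_nonneg fun b _ => hm a b).mp h b (mem_univ b)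
    · rw [mul_div_cancel₀ _ h]

end Kernels

section Payoffs

variable {K C D C' D' I J : Type*} [Fintype I] [Fintype J]

def condPay (g : K → I → J → ℝ) (σ : C → I → ℝ) (τ : D → J → ℝ) (x : K × C × D) : ℝ :=
  ∑ i, ∑ j, σ x.2.1 i * τ x.2.2 j * g x.1 i j

lemma abs_condPay_le_one {g : K → I → J → ℝ} {σ : C → I → ℝ} {τ : D → J → ℝ}
    (hg : Bounded1 g) (hσ : IsKernel σ) (hτ : IsKernel τ) (x : K × C × D) :
    |condPay g σ τ x| ≤ 1 := by
  have hw := (hσ x.2.1).prod (hτ x.2.2)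
  calc |condPay g σ τ x|
      ≤ ∑ i, ∑ j, |σ x.2.1 i * τ x.2.2 j * g x.1 i j| :=
        (abs_sum_le_sum_abs _ _).trans (sum_le_sum fun i _ => abs_sum_le_sum_abs _ _)
    _ ≤ ∑ i, ∑ j, σ x.2.1 i * τ x.2.2 j := by
        refine sum_le_sum fun i _ => sum_le_sum fun j _ => ?_
        rw [abs_mul, abs_of_nonneg (hw.1 (i, j))]
        exact mul_le_of_le_one_right (hw.1 (i, j)) (hg _ _ _)
    _ = 1 := by simpa only [Fintype.sum_prod_type] using hw.2

variable [Fintype K] [Fintype C] [Fintype D] [Fintype C'] [Fintype D']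

lemma pay_eq_sum_mul_condPay (u : K × C × D → ℝ) (g : K → I → J → ℝ) (σ : C → I → ℝ)
    (τ : D → J → ℝ) : pay u g σ τ = ∑ x, u x * condPay g σ τ x := by
  simp only [pay, condPay, Fintype.sum_prod_type, mul_sum, mul_assoc]

lemma pay_sub_pay_le_l1 {g : K → I → J → ℝ} {σ : C → I → ℝ} {τ : D → J → ℝ}
    (hg : Bounded1 g) (hσ : IsKernel σ) (hτ : IsKernel τ) (u v : K × C × D → ℝ) :
    pay u g σ τ - pay v g σ τ ≤ l1 u v := by
  rw [pay_eq_sum_mul_condPay, pay_eq_sum_mul_condPay, ← sum_sub_distrib]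
  refine sum_le_sum fun x _ => ?_
  rw [← sub_mul]
  exact (le_abs_self _).trans <| (abs_mul _ _).trans_le <|
    mul_le_of_le_one_right (abs_nonneg _) (abs_condPay_le_one hg hσ hτ x)

lemma abs_pay_le_one {u : K × C × D → ℝ} {g : K → I → J → ℝ} {σ : C → I → ℝ} {τ : D → J → ℝ}
    (hu : IsDist u) (hg : Bounded1 g) (hσ : IsKernel σ) (hτ : IsKernel τ) :
    |pay u g σ τ| ≤ 1 := by
  rw [pay_eq_sum_mul_condPay, ← hu.2]
  refine (abs_sum_le_sum_abs _ _).trans (sum_le_sum fun x _ => ?_)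
  rw [abs_mul, abs_of_nonneg (hu.1 x)]
  exact mul_le_of_le_one_right (hu.1 x) (abs_condPay_le_one hg hσ hτ x)

lemma pay_garbleR (κ : D → D' → ℝ) (u : K × C × D → ℝ) (g : K → I → J → ℝ) (σ : C → I → ℝ)
    (τ : D' → J → ℝ) :
    pay (garbleR κ u) g σ τ = pay u g σ (fun d j => ∑ d', κ d d' * τ d' j) := by
  simp only [pay, garbleR, sum_mul, mul_sum]
  refine sum_congr rfl fun k _ => sum_congr rfl fun c _ => ?_
  conv_lhs => enter [2, d']; rw [sum_comm_cycle]
  conv_rhs => enter [2, d]; rw [sum_comm_cycle]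
  rw [sum_comm]
  exact sum_congr rfl fun d _ => sum_congr rfl fun d' _ => sum_congr rfl fun i _ =>
    sum_congr rfl fun j _ => by ring

lemma pay_garbleL (κ : C → C' → ℝ) (u : K × C × D → ℝ) (g : K → I → J → ℝ) (σ : C' → I → ℝ)
    (τ : D → J → ℝ) :
    pay (garbleL κ u) g σ τ = pay u g (fun c i => ∑ c', κ c c' * σ c' i) τ := by
  simp only [pay, garbleL, sum_mul, mul_sum]
  refine sum_congr rfl fun k _ => ?_
  conv_lhs => rw [sum_comm]; enter [2, d]; enter [2, c']; rw [sum_comm_cycle]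
  conv_rhs => rw [sum_comm]; enter [2, d]; enter [2, c]; rw [sum_comm_cycle]
  refine sum_congr rfl fun d _ => sum_comm.trans <| sum_congr rfl fun c _ =>
    sum_congr rfl fun c' _ => sum_congr rfl fun i _ => sum_congr rfl fun j _ => by ring

end Payoffs

section L1

variable {α β : Type*} [Fintype α] [Fintype β]

lemma l1_eq_sum_add_sum_sub_two_mul_sum_min (μ ν : α → ℝ) :
    l1 μ ν = ∑ a, μ a + ∑ a, ν a - 2 * ∑ a, min (μ a) (ν a) := by
  rw [l1, ← sum_add_distrib, mul_sum, ← sum_sub_distrib]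
  refine sum_congr rfl fun a _ => ?_
  rw [← max_sub_min_eq_abs']
  linarith [min_add_max (μ a) (ν a)]

lemma l1_mix_le {κ : α → β → ℝ} (hκ : IsKernel κ) (μ ν : α → ℝ) :
    l1 (fun b => ∑ a, μ a * κ a b) (fun b => ∑ a, ν a * κ a b) ≤ l1 μ ν := by
  calc ∑ b, |∑ a, μ a * κ a b - ∑ a, ν a * κ a b|
      ≤ ∑ b, ∑ a, |μ a - ν a| * κ a b := by
        refine sum_le_sum fun b _ => ?_
        rw [← sum_sub_distrib]
        refine (abs_sum_le_sum_abs _ _).trans_eq (sum_congr rfl fun a _ => ?_)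
        rw [← sub_mul, abs_mul, abs_of_nonneg ((hκ a).1 b)]
    _ = l1 μ ν := by simp only [sum_comm (γ := β), ← mul_sum, (hκ _).2, mul_one, l1]

end L1

section Coupling

variable {K C D C' D' : Type*} [Fintype K] [Fintype C] [Fintype D] [Fintype C'] [Fintype D']

lemma sum_min_ite_eq_min [DecidableEq K] {a b : K → ℝ} (ha : ∀ k, 0 ≤ a k) (hb : ∀ k, 0 ≤ b k)
    {x y : ℝ} (hx : 0 ≤ x) (hy : 0 ≤ y) (k : K) :
    ∑ z : K × K, min (if z.1 = k then x * a z.2 else 0) (if z.2 = k then b z.1 * y else 0) =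
      min (x * a k) (b k * y) := by
  rw [Fintype.sum_prod_type, Fintype.sum_eq_single k, Fintype.sum_eq_single k]
  · simp
  · intro k' hk'
    simp only [if_true, if_neg hk']
    exact min_eq_right (mul_nonneg hx (ha k'))
  · intro k' hk'
    refine sum_eq_zero fun k'' _ => ?_
    simp only [if_neg hk']
    exact min_eq_left (by split_ifs; exacts [mul_nonneg (hb k') hy, le_rfl])

lemma l1_garbleR_garbleL_le {u : K × C × D → ℝ} {v : K × C' × D' → ℝ} {p q p' q' : K → ℝ}
    {r : K → C → ℝ} {s : K → D' → ℝ} (hp : IsDist p) (hq : IsDist q) (hp' : IsDist p')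
    (hq' : IsDist q') (hr : IsKernel r) (hs : IsKernel s)
    (hur : ∀ k c, ∑ d, u (k, c, d) = p k * r k c)
    (hvs : ∀ k d', ∑ c', v (k, c', d') = q k * s k d') :
    l1 (garbleR (fun _ d' => ∑ b, q' b * s b d') u) (garbleL (fun _ c => ∑ a, p' a * r a c) v) ≤
      2 - 2 * ∑ k, min (p k * q' k) (p' k * q k) := by
  classical
  set ρ : K × K → C × D' → ℝ := fun z y => r z.1 y.1 * s z.2 y.2
  have hρ : IsKernel ρ := fun z => (hr z.1).prod (hs z.2)
  -- `z = (a, b)` records the states behind the two signals; `μ k`, `ν k` weigh the two plays.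
  set μ : K → K × K → ℝ := fun k z => if z.1 = k then p k * q' z.2 else 0
  set ν : K → K × K → ℝ := fun k z => if z.2 = k then p' z.1 * q k else 0
  have hμρ : ∀ k c d', garbleR (fun _ d' => ∑ b, q' b * s b d') u (k, c, d') =
      ∑ z, μ k z * ρ z (c, d') := by
    intro k c d'
    rw [Fintype.sum_prod_type, Fintype.sum_eq_single k fun a ha => by simp [μ, ha]]
    rw [garbleR, ← sum_mul, hur, mul_sum]
    exact sum_congr rfl fun b _ => by simp only [μ, ρ, if_pos]; ring
  have hνρ : ∀ k c d', garbleL (fun _ c => ∑ a, p' a * r a c) v (k, c, d') =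
      ∑ z, ν k z * ρ z (c, d') := by
    intro k c d'
    rw [Fintype.sum_prod_type, sum_comm, Fintype.sum_eq_single k fun b hb => by simp [ν, hb]]
    rw [garbleL, ← sum_mul, hvs, mul_sum]
    exact sum_congr rfl fun a _ => by simp only [ν, ρ, if_pos]; ring
  have hμ : ∀ k, ∑ z, μ k z = p k := by
    intro k
    simp [μ, Fintype.sum_prod_type, ← mul_sum, hq'.2]
  have hν : ∀ k, ∑ z, ν k z = q k := by
    intro k
    simp [ν, Fintype.sum_prod_type, ← sum_mul, hp'.2]
  calc l1 (garbleR (fun _ d' => ∑ b, q' b * s b d') u) (garbleL (fun _ c => ∑ a, p' a * r a c) v)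
      = ∑ k, l1 (fun y => ∑ z, μ k z * ρ z y) (fun y => ∑ z, ν k z * ρ z y) := by
        simp only [l1, Fintype.sum_prod_type, hμρ, hνρ]
    _ ≤ ∑ k, l1 (μ k) (ν k) := sum_le_sum fun k _ => l1_mix_le hρ _ _
    _ = ∑ k, (p k + q k - 2 * min (p k * q' k) (p' k * q k)) := by
        simp only [l1_eq_sum_add_sum_sub_two_mul_sum_min, hμ, hν, μ, ν,
          sum_min_ite_eq_min hq'.1 hp'.1 (hp.1 _) (hq.1 _)]
    _ = 2 - 2 * ∑ k, min (p k * q' k) (p' k * q k) := by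
        rw [sum_sub_distrib, sum_add_distrib, hp.2, hq.2, mul_sum]
        ring

end Coupling

section Value

variable {K C D C' D' I J : Type*} [Fintype K] [Fintype C] [Fintype D] [Fintype C'] [Fintype D']
  [Fintype I] [Fintype J]

noncomputable def guarantee (u : K × C × D → ℝ) (g : K → I → J → ℝ) (σ : C → I → ℝ) : ℝ :=
  sInf {y : ℝ | ∃ τ : D → J → ℝ, IsKernel τ ∧ y = pay u g σ τ}

variable {u : K × C × D → ℝ} {v : K × C' × D' → ℝ} {g : K → I → J → ℝ}

lemma guarantee_le_pay (hu : IsDist u) (hg : Bounded1 g) {σ : C → I → ℝ} (hσ : IsKernel σ)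
    {τ : D → J → ℝ} (hτ : IsKernel τ) : guarantee u g σ ≤ pay u g σ τ :=
  csInf_le ⟨-1, by rintro _ ⟨τ, hτ, rfl⟩; exact (abs_le.mp (abs_pay_le_one hu hg hσ hτ)).1⟩
    ⟨τ, hτ, rfl⟩

lemma le_guarantee [Nonempty J] {σ : C → I → ℝ} {a : ℝ}
    (h : ∀ τ : D → J → ℝ, IsKernel τ → a ≤ pay u g σ τ) : a ≤ guarantee u g σ :=
  have ⟨τ, hτ⟩ := exists_isKernel D (β := J)
  le_csInf ⟨_, τ, hτ, rfl⟩ (by rintro _ ⟨τ, hτ, rfl⟩; exact h τ hτ)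

lemma guarantee_le_gameVal [Nonempty J] (hu : IsDist u) (hg : Bounded1 g) {σ : C → I → ℝ}
    (hσ : IsKernel σ) : guarantee u g σ ≤ gameVal u g := by
  refine le_csSup ⟨1, ?_⟩ ⟨σ, hσ, rfl⟩
  rintro _ ⟨σ', hσ', rfl⟩
  obtain ⟨τ, hτ⟩ := exists_isKernel D (β := J)
  exact (guarantee_le_pay hu hg hσ' hτ).trans (abs_le.mp (abs_pay_le_one hu hg hσ' hτ)).2

lemma gameVal_le [Nonempty I] {a : ℝ} (h : ∀ σ : C → I → ℝ, IsKernel σ → guarantee u g σ ≤ a) :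
    gameVal u g ≤ a :=
  have ⟨σ, hσ⟩ := exists_isKernel C (β := I)
  csSup_le ⟨_, σ, hσ, rfl⟩ (by rintro _ ⟨σ, hσ, rfl⟩; exact h σ hσ)

lemma gameVal_le_gameVal_add_of_imitate [Nonempty I] [Nonempty J] (hu : IsDist u) (hv : IsDist v)
    (hg : Bounded1 g) {δ : ℝ}
    (h : ∀ σ : C → I → ℝ, IsKernel σ → ∃ σ' : C' → I → ℝ, IsKernel σ' ∧ ∀ τ' : D' → J → ℝ,
      IsKernel τ' → ∃ τ : D → J → ℝ, IsKernel τ ∧ pay u g σ τ ≤ pay v g σ' τ' + δ) :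
    gameVal u g ≤ gameVal v g + δ := by
  refine gameVal_le fun σ hσ => ?_
  obtain ⟨σ', hσ', himitate⟩ := h σ hσ
  have : guarantee u g σ - δ ≤ guarantee v g σ' := le_guarantee fun τ' hτ' => by
    obtain ⟨τ, hτ, hle⟩ := himitate τ' hτ'
    linarith [guarantee_le_pay hu hg hσ hτ]
  linarith [guarantee_le_gameVal hv hg hσ']

end Value

section Main

variable {K C D C' D' : Type*} [Fintype K] [Fintype C] [Fintype D] [Fintype C'] [Fintype D']
  {u : K × C × D → ℝ} {v : K × C' × D' → ℝ} {p q p' q' : K → ℝ}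

theorem gameVal_le_gameVal_add_two_sub_two_mul_sum_min {I J : Type*} [Fintype I] [Fintype J]
    [Nonempty I] [Nonempty J] (hu : IsDist u) (hv : IsDist v)
    (hp : ∀ k, ∑ c, ∑ d, u (k, c, d) = p k)
    (hq : ∀ k, ∑ c, ∑ d, v (k, c, d) = q k) (hp' : IsDist p') (hq' : IsDist q')
    {g : K → I → J → ℝ} (hg : Bounded1 g) :
    gameVal u g ≤ gameVal v g + (2 - 2 * ∑ k, min (p k * q' k) (p' k * q k)) := by
  have : Nonempty C := hu.nonempty.map (·.2.1)
  have : Nonempty D' := hv.nonempty.map (·.2.2)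
  obtain ⟨r, hr, hur⟩ := exists_isKernel_mul_eq (m := fun k c => ∑ d, u (k, c, d))
    fun _ _ => sum_nonneg fun _ _ => hu.1 _
  obtain ⟨s, hs, hvs⟩ := exists_isKernel_mul_eq (m := fun k d' => ∑ c', v (k, c', d'))
    fun _ _ => sum_nonneg fun _ _ => hv.1 _
  simp only [hp] at hur
  simp only [sum_comm (γ := D'), hq] at hvs
  refine gameVal_le_gameVal_add_of_imitate hu hv hg fun σ hσ =>
    ⟨_, fun _ => (hp'.mix hr).mix hσ, fun τ' hτ' => ⟨_, fun _ => (hq'.mix hs).mix hτ', ?_⟩⟩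
  rw [← pay_garbleR, ← pay_garbleL]
  linarith [pay_sub_pay_le_l1 hg hσ hτ' (garbleR (fun _ d' => ∑ b, q' b * s b d') u)
      (garbleL (fun _ c => ∑ a, p' a * r a c) v),
    l1_garbleR_garbleL_le (isDist_marginal hu hp) (isDist_marginal hv hq) hp' hq' hr hs hur hvs]

theorem valueDist_le_two_sub_two_mul_sum_min (hu : IsDist u) (hv : IsDist v)
    (hp : ∀ k, ∑ c, ∑ d, u (k, c, d) = p k) (hq : ∀ k, ∑ c, ∑ d, v (k, c, d) = q k)
    (hp' : IsDist p') (hq' : IsDist q') :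
    valueDist u v ≤ 2 - 2 * ∑ k, min (p k * q' k) (p' k * q k) := by
  refine csSup_le ⟨_, 0, 0, fun _ _ _ => 0, fun _ _ _ => by simp, rfl⟩ ?_
  rintro _ ⟨m, n, g, hg, rfl⟩
  have hsymm : ∑ k, min (q k * p' k) (q' k * p k) = ∑ k, min (p k * q' k) (p' k * q k) :=
    sum_congr rfl fun k _ => by rw [min_comm, mul_comm (q k), mul_comm (q' k)]
  rw [abs_sub_le_iff]
  constructor
  · linarith [gameVal_le_gameVal_add_two_sub_two_mul_sum_min hu hv hp hq hp' hq' hg]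
  · linarith [gameVal_le_gameVal_add_two_sub_two_mul_sum_min hv hu hq hp hq' hp' hg]

end Main

theorem stmt5 {K C D C' D' : Type*} [Fintype K] [Nonempty K]
    [Fintype C] [Fintype D] [Fintype C'] [Fintype D']
    (u : K × C × D → ℝ) (v : K × C' × D' → ℝ) (hu : IsDist u) (hv : IsDist v)
    (p q : K → ℝ)
    (hp : ∀ k, ∑ c, ∑ d, u (k, c, d) = p k)
    (hq : ∀ k, ∑ c, ∑ d, v (k, c, d) = q k) :
    valueDist u v ≤ 2 * (1 - sSup {t : ℝ | ∃ p' q' : K → ℝ, IsDist p' ∧ IsDist q' ∧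
        t = ∑ k, min (p k * q' k) (p' k * q k)}) ∧
      (p = q → valueDist u v ≤ 2 * (1 - ⨆ k, p k)) := by
  have hpd := isDist_marginal hu hp
  constructor
  · have : sSup {t : ℝ | ∃ p' q' : K → ℝ, IsDist p' ∧ IsDist q' ∧
        t = ∑ k, min (p k * q' k) (p' k * q k)} ≤ 1 - valueDist u v / 2 := by
      refine csSup_le ⟨_, p, p, hpd, hpd, rfl⟩ ?_
      rintro _ ⟨p', q', hp', hq', rfl⟩
      linarith [valueDist_le_two_sub_two_mul_sum_min hu hv hp hq hp' hq']
    linarith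
  · rintro rfl
    have : ⨆ k, p k ≤ 1 - valueDist u v / 2 := ciSup_le fun k => by
      classical
      have := valueDist_le_two_sub_two_mul_sum_min hu hv hp hq (isDist_pi_single k)
        (isDist_pi_single k)
      simp only [Pi.single_apply, mul_ite, ite_mul, mul_one, one_mul, mul_zero, zero_mul, min_self,
        sum_ite_eq', mem_univ, if_true] at this
      linarith
    linarith
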